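/- Let S_k be the symmetric group and for σ ∈ S_k let e(σ) be the number of descents of σ. Then for each k ≥ 1, the Chen–Strichartz coefficient normalization holds: Σ_{σ ∈ S_k} (−1)^{e(σ)} / (k² · binom(k−1, e(σ))) applied to the identity-type word (i,i,...,i) with all letters equal gives Λ_{(i,...,i)}(B)_t = 0 for k ≥ 2, and Λ_{(i)}(B)_t = B^i_t; i.e., for a word I with all letters equal and length k ≥ 2, Σ_{σ∈S_k} (−1)^{e(σ)}/(k² binom(k−1,e(σ))) ∫_{Δ^k[0,t]} ∘dB^{σ^{-1}(I)} = 0 since the symmetrized iterated integral of a single coordinate equals (B^i_t)^k/k! for every σ, and Σ_{σ∈S_k} (−1)^{e(σ)}/(k² binom(k−1,e(σ))) = 0 for k ≥ 2. -/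

import Mathlib

open MeasureTheory ProbabilityTheory Filter

noncomputable section

/-- The piecewise linear interpolation of a path `f` along the dyadic subdivision
`{k t / 2^n}` of `[0, t]`. -/
def dyadicInterp (t : ℝ) (n : ℕ) (f : ℝ → ℝ) : ℝ → ℝ := fun u =>
  f ((⌊u * 2 ^ n / t⌋ : ℤ) * t / 2 ^ n) +
    (u * 2 ^ n / t - ⌊u * 2 ^ n / t⌋) *
      (f (((⌊u * 2 ^ n / t⌋ : ℤ) + 1) * t / 2 ^ n) - f ((⌊u * 2 ^ n / t⌋ : ℤ) * t / 2 ^ n))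

/-- The simplex `Δ^k[0,t] = {0 ≤ s_1 ≤ ... ≤ s_k ≤ t}`. -/
def simplexSet (k : ℕ) (t : ℝ) : Set (Fin k → ℝ) :=
  {s | (∀ i, 0 ≤ s i ∧ s i ≤ t) ∧ ∀ i j : Fin k, i ≤ j → s i ≤ s j}

/-- The iterated integral `∫_{Δ^{|I|}[0,t]} dx^I` of a (piecewise smooth) path
`X : Fin (d+1) → ℝ → ℝ` along a word `I`. -/
def iterIntegral {d : ℕ} (X : Fin (d + 1) → ℝ → ℝ) (I : List (Fin (d + 1))) (t : ℝ) : ℝ :=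
  ∫ s in simplexSet I.length t, ∏ m : Fin I.length, deriv (X (I.get m)) (s m)

/-- The iterated Stratonovich integral `∫_{Δ^{|I|}[0,t]} ∘dB^I`: the limit (when it
exists) of the iterated integrals of the piecewise linear dyadic interpolations of
the path. -/
def stratIter {d : ℕ} {Ω : Type*} (B : ℝ → Ω → Fin (d + 1) → ℝ)
    (I : List (Fin (d + 1))) (t : ℝ) (ω : Ω) : ℝ :=
  limUnder atTop fun n : ℕ =>
    iterIntegral (fun i u => dyadicInterp t n (fun v => B v ω i) u) I t

/-- `B` is a standard `d`-dimensional Brownian motion on `(Ω, μ)`. -/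
structure IsBrownian (d : ℕ) {Ω : Type*} [MeasurableSpace Ω] (μ : Measure Ω)
    (B : ℝ → Ω → Fin d → ℝ) : Prop where
  meas : ∀ t, Measurable (B t)
  init : ∀ᵐ ω ∂μ, B 0 ω = 0
  cont : ∀ᵐ ω ∂μ, Continuous fun t => B t ω
  gauss : ∀ s t : ℝ, 0 ≤ s → s ≤ t → ∀ i,
    Measure.map (fun ω => B t ω i - B s ω i) μ = gaussianReal 0 (Real.toNNReal (t - s))
  indep : ∀ (n : ℕ) (τ : Fin (n + 1) → ℝ), Monotone τ → 0 ≤ τ 0 →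
    iIndepFun
      (fun p : Fin n × Fin d => fun ω => B (τ p.1.succ) ω p.2 - B (τ p.1.castSucc) ω p.2) μ

/-- The Brownian motion extended by time as zeroth component: `B⁰_t = t`. -/
def withTime {d : ℕ} {Ω : Type*} (B : ℝ → Ω → Fin d → ℝ) : ℝ → Ω → Fin (d + 1) → ℝ :=
  fun t ω => Fin.cons t (B t ω)

/-- Words that are concatenations of the blocks `(0)` and `(i,i)`, `i ≠ 0`. -/
inductive GoodWord {d : ℕ} : List (Fin (d + 1)) → Prop
  | nil : GoodWord []
  | zero {w} : GoodWord w → GoodWord (0 :: w)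
  | pair {w} (i : Fin (d + 1)) : i ≠ 0 → GoodWord w → GoodWord (i :: i :: w)

/-- The number of descents `e(σ) = #{j : σ(j) > σ(j+1)}` of a permutation of `Fin k`. -/
def descents {k : ℕ} (σ : Equiv.Perm (Fin k)) : ℕ := by
  classical
  exact (Finset.univ.filter fun j : Fin k =>
    ∃ h : (j : ℕ) + 1 < k, σ ⟨(j : ℕ) + 1, h⟩ < σ j).card

/-- The Chen–Strichartz coefficient
`Λ_I(B)_t = Σ_{σ ∈ S_k} (-1)^{e(σ)} / (k² binom(k-1, e(σ))) ∫_{Δ^k[0,t]} ∘dB^{σ⁻¹(I)}`. -/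
def chenCoeff {d : ℕ} {Ω : Type*} (B : ℝ → Ω → Fin (d + 1) → ℝ)
    (I : List (Fin (d + 1))) (t : ℝ) (ω : Ω) : ℝ :=
  ∑ σ : Equiv.Perm (Fin I.length),
    ((-1 : ℝ) ^ descents σ /
        ((I.length : ℝ) ^ 2 * ((I.length - 1).choose (descents σ) : ℝ))) *
      stratIter B (List.ofFn fun j => I.get (σ⁻¹ j)) t ω



-- ## Auxiliary combinatorics

def dInd {k : ℕ} (σ : Equiv.Perm (Fin k)) (x : ℕ) : ℕ :=
  if h : x + 1 < k then
    (if σ ⟨x + 1, h⟩ < σ ⟨x, Nat.lt_of_succ_lt h⟩ then 1 else 0) else 0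

lemma dInd_le_one {k : ℕ} (σ : Equiv.Perm (Fin k)) (x : ℕ) : dInd σ x ≤ 1 := by
  unfold dInd
  split
  · split <;> simp
  · simp

lemma dInd_of_lt {k : ℕ} (σ : Equiv.Perm (Fin k)) {x : ℕ} (h : x + 1 < k) :
    dInd σ x = if σ ⟨x + 1, h⟩ < σ ⟨x, Nat.lt_of_succ_lt h⟩ then 1 else 0 := dif_pos h

lemma dInd_eq_zero {k : ℕ} (σ : Equiv.Perm (Fin k)) {x : ℕ} (h : ¬ x + 1 < k) :
    dInd σ x = 0 := dif_neg h

lemma descents_eq_sum {k : ℕ} (σ : Equiv.Perm (Fin k)) :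
    descents σ = ∑ x ∈ Finset.range k, dInd σ x := by
  classical
  unfold descents
  rw [Finset.card_filter, ← Fin.sum_univ_eq_sum_range (fun x => dInd σ x) k]
  apply Finset.sum_congr rfl
  intro j _
  unfold dInd
  by_cases h : (j : ℕ) + 1 < k
  · rw [dif_pos h]
    by_cases h2 : σ ⟨(j : ℕ) + 1, h⟩ < σ ⟨(j : ℕ), Nat.lt_of_succ_lt h⟩
    · rw [if_pos h2, if_pos ⟨h, by simpa using h2⟩]
    · rw [if_neg h2, if_neg]
      rintro ⟨h', hlt⟩
      exact h2 (by simpa using hlt)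
  · rw [dif_neg h, if_neg]
    rintro ⟨h', -⟩
    exact h h'

lemma descents_eq_sum' {k : ℕ} (σ : Equiv.Perm (Fin k)) (hk : 1 ≤ k) :
    descents σ = ∑ x ∈ Finset.range (k - 1), dInd σ x := by
  rw [descents_eq_sum]
  obtain ⟨m, rfl⟩ : ∃ m, k = m + 1 := ⟨k - 1, by omega⟩
  rw [Finset.sum_range_succ, dInd_eq_zero σ (by omega)]
  simp

lemma descents_lt {k : ℕ} (σ : Equiv.Perm (Fin k)) (hk : 1 ≤ k) :
    descents σ < k := by
  rw [descents_eq_sum' σ hk]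
  calc ∑ x ∈ Finset.range (k - 1), dInd σ x ≤ ∑ _x ∈ Finset.range (k - 1), 1 :=
        Finset.sum_le_sum fun x _ => dInd_le_one σ x
    _ = k - 1 := by simp
    _ < k := by omega
noncomputable section

def ins {n : ℕ} (p : Fin (n + 1)) (σ : Equiv.Perm (Fin n)) : Equiv.Perm (Fin (n + 1)) :=
  (finSuccEquiv' p).trans ((σ.optionCongr).trans (finSuccEquiv' (Fin.last n)).symm)

lemma ins_apply_self {n : ℕ} (p : Fin (n + 1)) (σ : Equiv.Perm (Fin n)) :
    ins p σ p = Fin.last n := by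
  simp [ins]

lemma ins_apply_succAbove {n : ℕ} (p : Fin (n + 1)) (σ : Equiv.Perm (Fin n)) (j : Fin n) :
    ins p σ (p.succAbove j) = (σ j).castSucc := by
  simp [ins, finSuccEquiv'_succAbove, Fin.succAbove_last]

lemma ins_injective {n : ℕ} :
    Function.Injective (fun z : Equiv.Perm (Fin n) × Fin (n + 1) => ins z.2 z.1) := by
  rintro ⟨σ, p⟩ ⟨τ, q⟩ h
  simp only at h
  have hp : p = q := by
    have h1 : ins q τ p = ins q τ q := by
      conv_lhs => rw [← h]
      rw [ins_apply_self, ins_apply_self]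
    exact (ins q τ).injective h1
  subst hp
  have hσ : σ = τ := by
    ext j
    have h2 : ins p σ (p.succAbove j) = ins p τ (p.succAbove j) := by rw [h]
    rw [ins_apply_succAbove, ins_apply_succAbove] at h2
    exact congrArg Fin.val (Fin.castSucc_injective _ h2)
  simp [hσ]

lemma ins_bijective {n : ℕ} :
    Function.Bijective (fun z : Equiv.Perm (Fin n) × Fin (n + 1) => ins z.2 z.1) := by
  rw [Fintype.bijective_iff_injective_and_card]
  refine ⟨ins_injective, ?_⟩
  simp [Fintype.card_perm, Nat.factorial_succ, mul_comm]

lemma ins_apply_of_lt {n : ℕ} (p : Fin (n + 1)) (σ : Equiv.Perm (Fin n)) {x : ℕ}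
    (hx : x < n) (hxp : x < (p : ℕ)) :
    ins p σ ⟨x, by omega⟩ = (σ ⟨x, hx⟩).castSucc := by
  have h1 : (⟨x, by omega⟩ : Fin (n + 1)) = Fin.castSucc ⟨x, hx⟩ := rfl
  rw [h1, ← Fin.succAbove_of_castSucc_lt p ⟨x, hx⟩ (by simpa [Fin.lt_def] using hxp),
    ins_apply_succAbove]

lemma ins_apply_of_gt {n : ℕ} (p : Fin (n + 1)) (σ : Equiv.Perm (Fin n)) {x : ℕ}
    (hx : x < n + 1) (hxp : (p : ℕ) < x) :
    ins p σ ⟨x, hx⟩ = (σ ⟨x - 1, by omega⟩).castSucc := by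
  have hx1 : x - 1 < n := by omega
  have h1 : (⟨x, hx⟩ : Fin (n + 1)) = Fin.succ ⟨x - 1, hx1⟩ := by
    ext; simp; omega
  rw [h1, ← Fin.succAbove_of_le_castSucc p ⟨x - 1, hx1⟩ (by simp [Fin.le_def]; omega),
    ins_apply_succAbove]

lemma dInd_ins {n : ℕ} (p : Fin (n + 1)) (σ : Equiv.Perm (Fin n)) {x : ℕ} (hx : x < n) :
    dInd (ins p σ) x =
      if x + 1 = (p : ℕ) then 0
      else if x = (p : ℕ) then 1
      else if x + 1 < (p : ℕ) then dInd σ x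
      else dInd σ (x - 1) := by
  have hx1 : x + 1 < n + 1 := by omega
  have hx0 : x < n + 1 := by omega
  unfold dInd
  rw [dif_pos hx1]
  by_cases h1 : x + 1 = (p : ℕ)
  · rw [if_pos h1]
    have hb : (⟨x + 1, hx1⟩ : Fin (n + 1)) = p := by ext; simpa using h1
    rw [hb, ins_apply_self, if_neg (Fin.not_lt.2 (Fin.le_last _))]
  · rw [if_neg h1]
    by_cases h2 : x = (p : ℕ)
    · rw [if_pos h2]
      have ha : (⟨x, Nat.lt_of_succ_lt hx1⟩ : Fin (n + 1)) = p := by ext; simpa using h2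
      rw [ha, ins_apply_self, ins_apply_of_gt p σ hx1 (by omega), if_pos (Fin.castSucc_lt_last _)]
    · rw [if_neg h2]
      by_cases h3 : x + 1 < (p : ℕ)
      · rw [if_pos h3]
        have hxn : x + 1 < n := by have := p.isLt; omega
        rw [ins_apply_of_lt p σ hxn (by omega), ins_apply_of_lt p σ (Nat.lt_of_succ_lt hxn) (by omega)]
        rw [dif_pos hxn]
        simp [Fin.castSucc_lt_castSucc_iff]
      · rw [if_neg h3]
        have hgt : (p : ℕ) < x := by omega
        rw [ins_apply_of_gt p σ hx1 (by omega), ins_apply_of_gt p σ hx0 hgt]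
        rw [dif_pos (show (x - 1) + 1 < n by omega)]
        have e1 : (⟨x + 1 - 1, by omega⟩ : Fin n) = ⟨x - 1 + 1, by omega⟩ := by ext; simp; omega
        rw [e1]
        simp [Fin.castSucc_lt_castSucc_iff]

lemma descents_ins {n : ℕ} (hn : 1 ≤ n) (p : Fin (n + 1)) (σ : Equiv.Perm (Fin n)) :
    descents (ins p σ) =
      if (p : ℕ) = n then descents σ
      else if (p : ℕ) = 0 then descents σ + 1
      else descents σ + 1 - dInd σ ((p : ℕ) - 1) := by
  rw [descents_eq_sum, Finset.sum_range_succ, dInd_eq_zero _ (show ¬ n + 1 < n + 1 by omega),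
    Nat.add_zero]
  rw [Finset.sum_congr rfl (fun x hx => dInd_ins p σ (Finset.mem_range.1 hx))]
  obtain ⟨P, hP, hPeq⟩ : ∃ P, P < n + 1 ∧ (p : ℕ) = P := ⟨p, p.isLt, rfl⟩
  rw [hPeq]
  by_cases hn0 : P = n
  · rw [if_pos hn0]
    obtain ⟨m, rfl⟩ : ∃ m, n = m + 1 := ⟨n - 1, by omega⟩
    rw [Finset.sum_range_succ]
    have hlast : (if m + 1 = P then 0 else if m = P then 1
        else if m + 1 < P then dInd σ m else dInd σ (m - 1)) = 0 := by
      rw [if_pos (by omega)]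
    rw [hlast, Nat.add_zero, descents_eq_sum' σ (by omega)]
    simp only [Nat.add_sub_cancel]
    apply Finset.sum_congr rfl
    intro x hx
    have hxm := Finset.mem_range.1 hx
    rw [if_neg (by omega), if_neg (by omega), if_pos (by omega)]
  · rw [if_neg hn0]
    by_cases hp0 : P = 0
    · rw [if_pos hp0]
      obtain ⟨m, rfl⟩ : ∃ m, n = m + 1 := ⟨n - 1, by omega⟩
      rw [Finset.sum_range_succ']
      have h0 : (if 0 + 1 = P then 0 else if 0 = P then 1
          else if 0 + 1 < P then dInd σ 0 else dInd σ (0 - 1)) = 1 := by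
        rw [if_neg (by omega), if_pos (by omega)]
      rw [h0, descents_eq_sum' σ (by omega)]
      simp only [Nat.add_sub_cancel]
      congr 1
      apply Finset.sum_congr rfl
      intro x hx
      rw [if_neg (by omega), if_neg (by omega), if_neg (by omega)]
    · rw [if_neg hp0]
      -- 1 ≤ P ≤ n - 1
      have h1P : 1 ≤ P := by omega
      have hPn : P < n := by omega
      -- split range n at P
      rw [Finset.range_eq_Ico, ← Finset.sum_Ico_consecutive _ (Nat.zero_le P) (le_of_lt hPn)]
      -- lower part: x < P
      have hlow : ∑ x ∈ Finset.Ico 0 P, (if x + 1 = P then 0 else if x = P then 1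
          else if x + 1 < P then dInd σ x else dInd σ (x - 1))
          = ∑ x ∈ Finset.range (P - 1), dInd σ x := by
        rw [← Finset.range_eq_Ico]
        obtain ⟨q, rfl⟩ : ∃ q, P = q + 1 := ⟨P - 1, by omega⟩
        rw [Finset.sum_range_succ]
        have hq : (if q + 1 = q + 1 then 0 else if q = q + 1 then 1
            else if q + 1 < q + 1 then dInd σ q else dInd σ (q - 1)) = 0 := by
          rw [if_pos rfl]
        rw [hq, Nat.add_zero, Nat.add_sub_cancel]
        apply Finset.sum_congr rfl
        intro x hx
        have hxq := Finset.mem_range.1 hx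
        rw [if_neg (by omega), if_neg (by omega), if_pos (by omega)]
      -- upper part: P ≤ x < n
      have hupp : ∑ x ∈ Finset.Ico P n, (if x + 1 = P then 0 else if x = P then 1
          else if x + 1 < P then dInd σ x else dInd σ (x - 1))
          = 1 + ∑ x ∈ Finset.Ico P (n - 1), dInd σ x := by
        rw [Finset.sum_Ico_eq_sum_range]
        obtain ⟨r, hr⟩ : ∃ r, n - P = r + 1 := ⟨n - P - 1, by omega⟩
        rw [hr, Finset.sum_range_succ']
        have h0 : (if P + 0 + 1 = P then 0 else if P + 0 = P then 1
            else if P + 0 + 1 < P then dInd σ (P + 0) else dInd σ (P + 0 - 1)) = 1 := by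
          rw [if_neg (by omega), if_pos (by omega)]
        rw [h0, Nat.add_comm _ 1]
        congr 1
        rw [Finset.sum_Ico_eq_sum_range]
        have hrr : n - 1 - P = r := by omega
        rw [hrr]
        apply Finset.sum_congr rfl
        intro x hx
        rw [if_neg (by omega), if_neg (by omega), if_neg (by omega),
          Nat.add_succ_sub_one]
      rw [hlow, hupp]
      -- RHS
      have hrhs : descents σ = ∑ x ∈ Finset.range (P - 1), dInd σ x + dInd σ (P - 1)
          + ∑ x ∈ Finset.Ico P (n - 1), dInd σ x := by
        rw [descents_eq_sum' σ (by omega)]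
        rw [Finset.range_eq_Ico, ← Finset.sum_Ico_consecutive _ (Nat.zero_le P) (by omega : P ≤ n - 1)]
        rw [← Finset.range_eq_Ico]
        congr 1
        obtain ⟨q, rfl⟩ : ∃ q, P = q + 1 := ⟨P - 1, by omega⟩
        rw [Finset.sum_range_succ, Nat.add_sub_cancel]
      rw [hrhs]
      have := dInd_le_one σ (P - 1)
      omega

lemma sum_w_ins {n : ℕ} (hn : 1 ≤ n) (w : ℕ → ℝ) (σ : Equiv.Perm (Fin n)) :
    ∑ p : Fin (n + 1), w (descents (ins p σ)) =
      ((descents σ : ℝ) + 1) * w (descents σ) +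
        ((n : ℝ) - (descents σ : ℝ)) * w (descents σ + 1) := by
  set E := descents σ with hE
  have hEn : E < n := descents_lt σ hn
  have h1 : ∀ p : Fin (n + 1), w (descents (ins p σ)) =
      (fun P : ℕ => if P = n then w E else if P = 0 then w (E + 1)
        else w (E + 1 - dInd σ (P - 1))) (p : ℕ) := by
    intro p
    simp only
    rw [descents_ins hn p σ]
    split_ifs <;> rfl
  rw [Finset.sum_congr rfl (fun p _ => h1 p),
    Fin.sum_univ_eq_sum_range (fun P : ℕ => if P = n then w E else if P = 0 then w (E + 1)
        else w (E + 1 - dInd σ (P - 1))) (n + 1)]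
  obtain ⟨m, rfl⟩ : ∃ m, n = m + 1 := ⟨n - 1, by omega⟩
  rw [Finset.sum_range_succ, Finset.sum_range_succ']
  rw [if_pos rfl, if_neg (by omega), if_pos rfl]
  have h2 : ∀ x ∈ Finset.range m, (if x + 1 = m + 1 then w E else if x + 1 = 0 then w (E + 1)
      else w (E + 1 - dInd σ (x + 1 - 1))) =
      w (E + 1) + (dInd σ x : ℝ) * (w E - w (E + 1)) := by
    intro x hx
    have hxm := Finset.mem_range.1 hx
    rw [if_neg (by omega), if_neg (by omega)]
    have e : x + 1 - 1 = x := rfl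
    rw [e]
    rcases Nat.le_one_iff_eq_zero_or_eq_one.1 (dInd_le_one σ x) with h | h
    · rw [h]
      norm_num
    · rw [h]
      norm_num
  rw [Finset.sum_congr rfl h2, Finset.sum_add_distrib, Finset.sum_const, Finset.card_range,
    ← Finset.sum_mul]
  have hdesc : ((∑ x ∈ Finset.range m, (dInd σ x : ℝ))) = (E : ℝ) := by
    rw [← Nat.cast_sum]
    norm_cast
    rw [hE, descents_eq_sum' σ (by omega), Nat.add_sub_cancel]
  rw [hdesc]
  push_cast
  ring

lemma key_w {n : ℕ} (E : ℕ) (hE : E < n) :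
    ((E : ℝ) + 1) * ((-1 : ℝ) ^ E / (((n : ℝ) + 1) ^ 2 * (n.choose E : ℝ))) +
      ((n : ℝ) - (E : ℝ)) * ((-1 : ℝ) ^ (E + 1) / (((n : ℝ) + 1) ^ 2 * (n.choose (E + 1) : ℝ))) = 0 := by
  have h1 : (n.choose E : ℝ) ≠ 0 := by
    exact_mod_cast (Nat.choose_pos (le_of_lt hE)).ne'
  have h2 : (n.choose (E + 1) : ℝ) ≠ 0 := by
    exact_mod_cast (Nat.choose_pos hE).ne'
  have h3 : ((n : ℝ) + 1) ^ 2 ≠ 0 := by positivity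
  have key : (n.choose (E + 1) : ℝ) * ((E : ℝ) + 1) = (n.choose E : ℝ) * ((n : ℝ) - (E : ℝ)) := by
    have h := Nat.choose_succ_right_eq n E
    have hcast : ((n.choose (E + 1) : ℝ)) * ((E : ℝ) + 1) = (n.choose E : ℝ) * (((n - E : ℕ) : ℝ)) := by
      exact_mod_cast congrArg (Nat.cast : ℕ → ℝ) h
    rwa [Nat.cast_sub (le_of_lt hE)] at hcast
  have h4 : ((E : ℝ) + 1) / (n.choose E : ℝ) = ((n : ℝ) - (E : ℝ)) / (n.choose (E + 1) : ℝ) := by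
    rw [div_eq_div_iff h1 h2]
    linarith [key]
  have expand : ((E : ℝ) + 1) * ((-1 : ℝ) ^ E / (((n : ℝ) + 1) ^ 2 * (n.choose E : ℝ))) +
      ((n : ℝ) - (E : ℝ)) * ((-1 : ℝ) ^ (E + 1) / (((n : ℝ) + 1) ^ 2 * (n.choose (E + 1) : ℝ)))
      = ((-1 : ℝ) ^ E / (((n : ℝ) + 1) ^ 2)) *
          (((E : ℝ) + 1) / (n.choose E : ℝ) - ((n : ℝ) - (E : ℝ)) / (n.choose (E + 1) : ℝ)) := by
    field_simp
    ring
  rw [expand, h4, sub_self, mul_zero]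

lemma part_i (k : ℕ) (hk : 2 ≤ k) :
    ∑ σ : Equiv.Perm (Fin k),
      (-1 : ℝ) ^ descents σ / ((k : ℝ) ^ 2 * ((k - 1).choose (descents σ) : ℝ)) = 0 := by
  obtain ⟨n, rfl⟩ : ∃ n, k = n + 1 := ⟨k - 1, by omega⟩
  have hn : 1 ≤ n := by omega
  have hcast : ((n + 1 : ℕ) : ℝ) = (n : ℝ) + 1 := by push_cast; ring
  have hsub : n + 1 - 1 = n := rfl
  set w : ℕ → ℝ := fun m => (-1 : ℝ) ^ m / (((n : ℝ) + 1) ^ 2 * (n.choose m : ℝ)) with hw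
  have hgoal : ∀ σ : Equiv.Perm (Fin (n + 1)),
      (-1 : ℝ) ^ descents σ / (((n + 1 : ℕ) : ℝ) ^ 2 * (((n + 1 - 1).choose (descents σ) : ℕ) : ℝ))
        = w (descents σ) := by
    intro σ
    rw [hw, hsub, hcast]
  rw [Finset.sum_congr rfl (fun σ _ => hgoal σ)]
  rw [← Fintype.sum_bijective (fun z : Equiv.Perm (Fin n) × Fin (n + 1) => ins z.2 z.1)
    ins_bijective _ _ (fun z => rfl)]
  rw [Fintype.sum_prod_type]
  apply Finset.sum_eq_zero
  intro σ _
  rw [sum_w_ins hn w σ]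
  exact key_w (descents σ) (descents_lt σ hn)


-- ## Auxiliary analysis

def chainSetP (k : ℕ) (σ : Equiv.Perm (Fin k)) : Set (Fin k → ℝ) :=
  {s | ∀ i j : Fin k, i ≤ j → s (σ i) ≤ s (σ j)}

def injSet (k : ℕ) : Set (Fin k → ℝ) := {s | Function.Injective s}

lemma meas_chainSetP (k : ℕ) (σ : Equiv.Perm (Fin k)) : MeasurableSet (chainSetP k σ) := by
  have h : chainSetP k σ = ⋂ (i : Fin k), ⋂ (j : Fin k), ⋂ (_ : i ≤ j),
      {s : Fin k → ℝ | s (σ i) ≤ s (σ j)} := by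
    ext s; simp [chainSetP]
  rw [h]
  exact MeasurableSet.iInter fun i => MeasurableSet.iInter fun j => MeasurableSet.iInter fun _ =>
    measurableSet_le (measurable_pi_apply _) (measurable_pi_apply _)

lemma meas_injSet (k : ℕ) : MeasurableSet (injSet k) := by
  have h : injSet k = ⋂ (i : Fin k), ⋂ (j : Fin k), ⋂ (_ : i ≠ j),
      {s : Fin k → ℝ | s i = s j}ᶜ := by
    ext s
    simp only [injSet, Set.mem_setOf_eq, Set.mem_iInter, Set.mem_compl_iff, Function.Injective]
    constructor
    · intro h i j hne hEq
      exact hne (h hEq)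
    · intro h a b hEq
      by_contra hne
      exact h a b hne hEq
  rw [h]
  exact MeasurableSet.iInter fun i => MeasurableSet.iInter fun j => MeasurableSet.iInter fun _ =>
    (measurableSet_eq_fun (measurable_pi_apply i) (measurable_pi_apply j)).compl

lemma hyp_null {k : ℕ} {i j : Fin k} (hij : i ≠ j) :
    volume {s : Fin k → ℝ | s i = s j} = 0 := by
  have h : {s : Fin k → ℝ | s i = s j} =
      (LinearMap.ker ((LinearMap.proj i : (Fin k → ℝ) →ₗ[ℝ] ℝ) - LinearMap.proj j) :
        Submodule ℝ (Fin k → ℝ)) := by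
    ext s
    simp [LinearMap.mem_ker, sub_eq_zero]
  rw [h]
  apply Measure.addHaar_submodule
  intro htop
  have h1 : (Pi.single i 1 : Fin k → ℝ) ∈
      LinearMap.ker ((LinearMap.proj i : (Fin k → ℝ) →ₗ[ℝ] ℝ) - LinearMap.proj j) := by
    rw [htop]; trivial
  rw [LinearMap.mem_ker] at h1
  simp only [LinearMap.sub_apply, LinearMap.proj_apply] at h1
  rw [Pi.single_eq_same, Pi.single_eq_of_ne (Ne.symm hij)] at h1
  norm_num at h1

lemma notInj_null (k : ℕ) : volume (injSet k)ᶜ = 0 := by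
  have hsub : (injSet k)ᶜ ⊆ ⋃ (i : Fin k), ⋃ (j : Fin k), ⋃ (_ : i ≠ j),
      {s : Fin k → ℝ | s i = s j} := by
    intro s hs
    simp only [injSet, Set.mem_compl_iff, Set.mem_setOf_eq, Function.Injective, not_forall] at hs
    obtain ⟨i, j, hEq, hne⟩ := hs
    exact Set.mem_iUnion.2 ⟨i, Set.mem_iUnion.2 ⟨j, Set.mem_iUnion.2 ⟨hne, hEq⟩⟩⟩
  refine measure_mono_null hsub ?_
  exact measure_iUnion_null fun i => measure_iUnion_null fun j =>
    measure_iUnion_null fun hij => hyp_null hij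

lemma chain_integral (k : ℕ) (ψ : ℝ → ℝ) (hψ : Integrable ψ) :
    ∫ s in chainSetP k 1, ∏ m, ψ (s m) = (∫ x, ψ x) ^ k / (Nat.factorial k : ℝ) := by
  classical
  set F : (Fin k → ℝ) → ℝ := fun s => ∏ m, ψ (s m) with hF
  have hFint : Integrable F := Integrable.fintype_prod (f := fun _ : Fin k => ψ) (fun _ => hψ)
  set Cs : Equiv.Perm (Fin k) → Set (Fin k → ℝ) := fun σ => chainSetP k σ ∩ injSet k with hCs
  have hCmeas : ∀ σ, MeasurableSet (Cs σ) := fun σ => (meas_chainSetP k σ).inter (meas_injSet k)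
  -- each piece has the same integral as the identity piece
  have hpiece : ∀ σ : Equiv.Perm (Fin k), ∫ s in Cs σ, F s = ∫ s in Cs 1, F s := by
    intro σ
    set T := MeasurableEquiv.piCongrLeft (fun _ : Fin k => ℝ) (σ : Fin k ≃ Fin k) with hT
    have hmp : MeasurePreserving T volume volume :=
      volume_measurePreserving_piCongrLeft (fun _ : Fin k => ℝ) (σ : Fin k ≃ Fin k)
    have hTapp : ∀ (x : Fin k → ℝ) (b : Fin k), T x b = x (σ.symm b) := by
      intro x b
      have h1 : T x (σ (σ.symm b)) = x (σ.symm b) :=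
        Equiv.piCongrLeft_apply_apply (fun _ : Fin k => ℝ) (σ : Fin k ≃ Fin k) x (σ.symm b)
      rwa [Equiv.apply_symm_apply] at h1
    have hpre : T ⁻¹' (Cs σ) = Cs 1 := by
      ext x
      simp only [hCs, Set.mem_preimage, Set.mem_inter_iff, chainSetP, injSet, Set.mem_setOf_eq]
      constructor
      · rintro ⟨h1, h2⟩
        constructor
        · intro i j hij
          have := h1 i j hij
          rwa [hTapp, hTapp, Equiv.symm_apply_apply, Equiv.symm_apply_apply] at this
        · intro a b hab
          have hab' : T x (σ a) = T x (σ b) := by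
            rw [hTapp, hTapp, Equiv.symm_apply_apply, Equiv.symm_apply_apply]
            exact hab
          exact σ.injective (h2 hab')
      · rintro ⟨h1, h2⟩
        constructor
        · intro i j hij
          rw [hTapp, hTapp, Equiv.symm_apply_apply, Equiv.symm_apply_apply]
          exact h1 i j hij
        · intro a b hab
          rw [hTapp, hTapp] at hab
          exact σ.symm.injective (h2 hab)
    have hcomp : ∀ x : Fin k → ℝ, F (T x) = F x := by
      intro x
      simp only [hF]
      rw [show (∏ m, ψ (T x m)) = ∏ m, ψ (x (σ.symm m)) by
        exact Finset.prod_congr rfl fun m _ => by rw [hTapp]]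
      exact Equiv.prod_comp σ.symm (fun m => ψ (x m))
    calc ∫ s in Cs σ, F s = ∫ x in T ⁻¹' (Cs σ), F (T x) :=
          (hmp.setIntegral_preimage_emb (MeasurableEquiv.measurableEmbedding T) F (Cs σ)).symm
      _ = ∫ x in Cs 1, F x := by
          rw [hpre]
          exact setIntegral_congr_fun (hCmeas 1) fun x _ => hcomp x
  -- the pieces cover the injective set
  have hcover : injSet k = ⋃ σ ∈ (Finset.univ : Finset (Equiv.Perm (Fin k))), Cs σ := by
    ext s
    simp only [Set.mem_iUnion, Finset.mem_univ, exists_true_left]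
    constructor
    · intro hs
      refine ⟨Tuple.sort s, ⟨?_, hs⟩⟩
      intro i j hij
      exact Tuple.monotone_sort s hij
    · rintro ⟨σ, -, hs⟩
      exact hs
  -- disjointness
  have hdisj : Set.Pairwise ((Finset.univ : Finset (Equiv.Perm (Fin k))) : Set (Equiv.Perm (Fin k)))
      (Function.onFun Disjoint Cs) := by
    intro σ _ τ _ hστ
    rw [Function.onFun, Set.disjoint_left]
    intro s hsσ hsτ
    obtain ⟨h1, hinj⟩ := hsσ
    obtain ⟨h2, -⟩ := hsτ
    have hm1 : Monotone (s ∘ σ) := fun i j hij => h1 i j hij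
    have hm2 : Monotone (s ∘ τ) := fun i j hij => h2 i j hij
    have := Tuple.unique_monotone hm1 hm2
    apply hστ
    ext x
    have hx := congrFun this x
    simp only [Function.comp_apply] at hx
    exact congrArg Fin.val (hinj hx)
  -- total integral
  have htotal : ∫ s, F s = (Nat.factorial k : ℝ) * ∫ s in Cs 1, F s := by
    have h1 : ∫ s, F s = ∫ s in injSet k, F s := by
      rw [← setIntegral_univ]
      exact (setIntegral_congr_set (ae_eq_univ.2 (notInj_null k))).symm
    rw [h1, hcover, integral_biUnion_finset Finset.univ (fun σ _ => hCmeas σ) hdisj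
      (fun σ _ => hFint.integrableOn)]
    rw [Finset.sum_congr rfl (fun σ _ => hpiece σ), Finset.sum_const, Finset.card_univ,
      Fintype.card_perm, Fintype.card_fin, nsmul_eq_mul]
  have hprod : ∫ s, F s = (∫ x, ψ x) ^ k := by
    rw [hF]
    beta_reduce
    rw [MeasureTheory.volume_pi, MeasureTheory.integral_fintype_prod_eq_pow (ι := Fin k) ψ]
    simp
  -- identify Cs 1 with chainSetP k 1 up to null
  have hae : ∫ s in Cs 1, F s = ∫ s in chainSetP k 1, F s := by
    apply setIntegral_congr_set
    show (chainSetP k 1 ∩ injSet k : Set (Fin k → ℝ)) =ᵐ[volume] chainSetP k 1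
    exact MeasureTheory.inter_ae_eq_left_of_ae_eq_univ (ae_eq_univ.2 (notInj_null k))
  have hk : (Nat.factorial k : ℝ) ≠ 0 := by positivity
  rw [← hae]
  field_simp
  rw [mul_comm, ← htotal, hprod]

lemma meas_simplexSet (k : ℕ) (t : ℝ) : MeasurableSet (simplexSet k t) := by
  have h : simplexSet k t =
      (⋂ (i : Fin k), ({s : Fin k → ℝ | 0 ≤ s i} ∩ {s : Fin k → ℝ | s i ≤ t})) ∩ chainSetP k 1 := by
    ext s
    simp only [simplexSet, chainSetP, Set.mem_inter_iff, Set.mem_iInter, Set.mem_setOf_eq]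
    constructor
    · rintro ⟨h1, h2⟩
      exact ⟨fun i => h1 i, fun i j hij => h2 i j hij⟩
    · rintro ⟨h1, h2⟩
      exact ⟨fun i => h1 i, fun i j hij => h2 i j hij⟩
  rw [h]
  refine MeasurableSet.inter (MeasurableSet.iInter fun i => MeasurableSet.inter ?_ ?_)
    (meas_chainSetP k 1)
  · exact measurableSet_le measurable_const (measurable_pi_apply i)
  · exact measurableSet_le (measurable_pi_apply i) measurable_const

lemma simplex_integral (k : ℕ) {t : ℝ} (ht : 0 < t) (ψ : ℝ → ℝ) (hψ : Integrable ψ)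
    (hsupp : ∀ x, x ∉ Set.Icc 0 t → ψ x = 0) :
    ∫ s in simplexSet k t, ∏ m, ψ (s m) = (∫ x, ψ x) ^ k / (Nat.factorial k : ℝ) := by
  classical
  rw [← chain_integral k ψ hψ]
  have hsub : simplexSet k t ⊆ chainSetP k 1 := by
    intro s hs
    intro i j hij
    exact hs.2 i j hij
  have h1 : ∫ s in chainSetP k 1, ∏ m, ψ (s m) =
      ∫ s in chainSetP k 1, Set.indicator (simplexSet k t) (fun s => ∏ m, ψ (s m)) s := by
    apply setIntegral_congr_fun (meas_chainSetP k 1)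
    intro s hs
    by_cases hmem : s ∈ simplexSet k t
    · rw [Set.indicator_of_mem hmem]
    · rw [Set.indicator_of_notMem hmem]
      have : ∃ i, s i ∉ Set.Icc (0:ℝ) t := by
        by_contra hcon
        push_neg at hcon
        exact hmem ⟨fun i => by
          have := hcon i
          exact ⟨this.1, this.2⟩, fun i j hij => hs i j hij⟩
      obtain ⟨i, hi⟩ := this
      exact Finset.prod_eq_zero (Finset.mem_univ i) (hsupp _ hi)
  rw [h1, setIntegral_indicator (meas_simplexSet k t),
    Set.inter_eq_self_of_subset_right hsub]

def dstep (t : ℝ) (n : ℕ) (f : ℝ → ℝ) (u : ℝ) : ℝ :=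
  2 ^ n / t * (f (((⌊u * 2 ^ n / t⌋ : ℤ) + 1) * t / 2 ^ n) - f ((⌊u * 2 ^ n / t⌋ : ℤ) * t / 2 ^ n))

lemma dstep_measurable (t : ℝ) (n : ℕ) (f : ℝ → ℝ) : Measurable (dstep t n f) := by
  have h : dstep t n f = (fun z : ℤ =>
      2 ^ n / t * (f ((z + 1 : ℤ) * t / 2 ^ n) - f ((z : ℤ) * t / 2 ^ n))) ∘
      (fun u : ℝ => ⌊u * 2 ^ n / t⌋) := by
    funext u
    simp [dstep]
  rw [h]
  exact measurable_from_top.comp (Int.measurable_floor.comp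
    ((measurable_id.mul_const _).div_const _))

lemma floor_mem_of_Icc {t : ℝ} (ht : 0 < t) (n : ℕ) {u : ℝ} (hu : u ∈ Set.Icc 0 t) :
    ⌊u * 2 ^ n / t⌋ ∈ Finset.Icc (0 : ℤ) (2 ^ n) := by
  obtain ⟨h0, h1⟩ := hu
  have h2 : (0:ℝ) < 2 ^ n := by positivity
  rw [Finset.mem_Icc]
  constructor
  · apply Int.floor_nonneg.2
    positivity
  · have hle : u * 2 ^ n / t ≤ ((2 ^ n : ℤ) : ℝ) := by
      rw [div_le_iff₀ ht]
      push_cast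
      nlinarith
    calc ⌊u * 2 ^ n / t⌋ ≤ ⌊((2 ^ n : ℤ) : ℝ)⌋ := Int.floor_le_floor hle
      _ = 2 ^ n := Int.floor_intCast _

lemma dstep_integrableOn {t : ℝ} (ht : 0 < t) (n : ℕ) (f : ℝ → ℝ) :
    IntegrableOn (dstep t n f) (Set.Icc 0 t) := by
  classical
  set M : ℝ := (Finset.Icc (0 : ℤ) (2 ^ n)).sup' ⟨0, by simp⟩
    (fun z : ℤ => |2 ^ n / t * (f (((z:ℝ) + 1) * t / 2 ^ n) - f ((z:ℝ) * t / 2 ^ n))|) with hM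
  apply Measure.integrableOn_of_bounded (M := M)
  · exact (measure_Icc_lt_top).ne
  · exact (dstep_measurable t n f).aestronglyMeasurable
  · rw [ae_restrict_iff' measurableSet_Icc]
    apply ae_of_all
    intro u hu
    have hmem := floor_mem_of_Icc ht n hu
    have heq : ‖dstep t n f u‖ = (fun z : ℤ =>
        |2 ^ n / t * (f (((z:ℝ) + 1) * t / 2 ^ n) - f ((z:ℝ) * t / 2 ^ n))|) ⌊u * 2 ^ n / t⌋ := by
      rw [Real.norm_eq_abs]; rfl
    rw [heq, hM]
    exact Finset.le_sup' (fun z : ℤ =>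
      |2 ^ n / t * (f (((z:ℝ) + 1) * t / 2 ^ n) - f ((z:ℝ) * t / 2 ^ n))|) hmem


lemma dstep_integral {t : ℝ} (ht : 0 < t) (n : ℕ) (f : ℝ → ℝ) :
    ∫ u in Set.Icc 0 t, dstep t n f u = f t - f 0 := by
  have h2 : (0:ℝ) < 2 ^ n := by positivity
  set a : ℕ → ℝ := fun j => j * t / 2 ^ n with ha
  have ha0 : a 0 = 0 := by simp [ha]
  have haN : a (2 ^ n) = t := by
    rw [ha]
    field_simp
    simp
  have hmono : ∀ {i j : ℕ}, i ≤ j → a i ≤ a j := by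
    intro i j hij
    have hij' : (i:ℝ) ≤ (j:ℝ) := by exact_mod_cast hij
    show (i:ℝ) * t / 2 ^ n ≤ (j:ℝ) * t / 2 ^ n
    gcongr
    all_goals first | exact ht.le | exact hij'
  have hrange : ∀ j : ℕ, j + 1 ≤ 2 ^ n → Set.Ioc (a j) (a (j + 1)) ⊆ Set.Icc 0 t := by
    intro j hj x hx
    constructor
    · have : 0 ≤ a j := by rw [← ha0]; exact hmono (Nat.zero_le j)
      linarith [hx.1]
    · have : a (j + 1) ≤ t := by rw [← haN]; exact hmono hj
      linarith [hx.2]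
  have hint : ∀ j : ℕ, j < 2 ^ n → IntervalIntegrable (dstep t n f) volume (a j) (a (j + 1)) := by
    intro j hj
    rw [intervalIntegrable_iff]
    apply (dstep_integrableOn ht n f).mono_set
    rw [Set.uIoc_of_le (hmono (Nat.le_succ j))]
    exact hrange j hj
  have hfloor : ∀ j : ℕ, ∀ u ∈ Set.Ioo (a j) (a (j + 1)), ⌊u * 2 ^ n / t⌋ = (j : ℤ) := by
    intro j u hu
    have h1' : (j:ℝ) * t / 2 ^ n < u := hu.1
    rw [div_lt_iff₀ h2] at h1'
    have h2' : u < ((j + 1 : ℕ):ℝ) * t / 2 ^ n := hu.2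
    rw [lt_div_iff₀ h2] at h2'
    rw [Int.floor_eq_iff]
    constructor
    · rw [le_div_iff₀ ht]
      push_cast
      push_cast at h1'
      linarith
    · rw [div_lt_iff₀ ht]
      push_cast
      push_cast at h2'
      linarith
  have hpiece : ∀ j : ℕ, j < 2 ^ n →
      ∫ u in (a j)..(a (j + 1)), dstep t n f u = f (a (j + 1)) - f (a j) := by
    intro j hj
    have hcongr : ∀ᵐ u : ℝ, u ∈ Set.uIoc (a j) (a (j + 1)) →
        dstep t n f u = 2 ^ n / t * (f (a (j + 1)) - f (a j)) := by
      filter_upwards [compl_mem_ae_iff.2 (measure_singleton (a (j + 1)))] with u hu hmem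
      rw [Set.uIoc_of_le (hmono (Nat.le_succ j))] at hmem
      have humem : u ∈ Set.Ioo (a j) (a (j + 1)) := by
        refine ⟨hmem.1, lt_of_le_of_ne hmem.2 ?_⟩
        simpa using hu
      rw [dstep, hfloor j u humem]
      have e1 : (((j : ℤ) : ℝ) + 1) * t / 2 ^ n = a (j + 1) := by
        rw [ha]; push_cast; ring
      have e2 : (((j : ℤ) : ℝ)) * t / 2 ^ n = a j := by
        rw [ha]; push_cast; ring
      rw [e1, e2]
    rw [intervalIntegral.integral_congr_ae hcongr, intervalIntegral.integral_const]
    have e3 : a (j + 1) - a j = t / 2 ^ n := by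
      rw [ha]; push_cast; ring
    rw [e3, smul_eq_mul]
    field_simp
  have hIcc : ∫ u in Set.Icc 0 t, dstep t n f u = ∫ u in (a 0)..(a (2 ^ n)), dstep t n f u := by
    rw [ha0, haN, intervalIntegral.integral_of_le ht.le, integral_Icc_eq_integral_Ioc]
  rw [hIcc, ← intervalIntegral.sum_integral_adjacent_intervals hint]
  rw [Finset.sum_congr rfl (fun j hj => hpiece j (Finset.mem_range.1 hj))]
  rw [Finset.sum_range_sub (fun j => f (a j)), ha0, haN]

lemma dyadic_deriv {t : ℝ} (ht : 0 < t) (n : ℕ) (f : ℝ → ℝ) {u : ℝ}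
    (hu : ∀ m : ℤ, u ≠ m * t / 2 ^ n) :
    deriv (dyadicInterp t n f) u = dstep t n f u := by
  have h2 : (0:ℝ) < 2 ^ n := by positivity
  set j : ℤ := ⌊u * 2 ^ n / t⌋ with hj
  set A : ℝ := (j : ℝ) * t / 2 ^ n with hA
  set B : ℝ := ((j : ℝ) + 1) * t / 2 ^ n with hB
  have hAu : A < u := by
    have h1 : (j : ℝ) ≤ u * 2 ^ n / t := Int.floor_le _
    have hne : (j : ℝ) ≠ u * 2 ^ n / t := by
      intro hEq
      apply hu j
      rw [hA] at *
      field_simp at hEq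
      rw [eq_comm] at hEq
      rw [eq_div_iff (ne_of_gt h2)]
      linarith
    have h1' : (j : ℝ) < u * 2 ^ n / t := lt_of_le_of_ne h1 hne
    rw [hA, div_lt_iff₀ h2, ← lt_div_iff₀ ht]
    linarith [h1']
  have huB : u < B := by
    have h1 : u * 2 ^ n / t < (j : ℝ) + 1 := Int.lt_floor_add_one _
    rw [hB, lt_div_iff₀ h2, ← div_lt_iff₀ ht]
    linarith
  have hfloor : ∀ v ∈ Set.Ioo A B, ⌊v * 2 ^ n / t⌋ = j := by
    intro v hv
    have h1' : (j:ℝ) * t / 2 ^ n < v := hv.1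
    rw [div_lt_iff₀ h2] at h1'
    have h2' : v < ((j:ℝ) + 1) * t / 2 ^ n := hv.2
    rw [lt_div_iff₀ h2] at h2'
    rw [Int.floor_eq_iff]
    constructor
    · rw [le_div_iff₀ ht]
      linarith
    · rw [div_lt_iff₀ ht]
      push_cast
      linarith
  have hev : dyadicInterp t n f =ᶠ[nhds u]
      fun v => f A + (v * 2 ^ n / t - (j : ℝ)) * (f B - f A) := by
    filter_upwards [isOpen_Ioo.mem_nhds ⟨hAu, huB⟩] with v hv
    rw [dyadicInterp]
    rw [hfloor v hv]
  rw [hev.deriv_eq]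
  have hder : HasDerivAt (fun v : ℝ => f A + (v * 2 ^ n / t - (j : ℝ)) * (f B - f A))
      (1 * 2 ^ n / t * (f B - f A)) u := by
    exact ((((hasDerivAt_id u).mul_const (2 ^ n : ℝ)).div_const t).sub_const (j : ℝ)).mul_const
      (f B - f A) |>.const_add (f A)
  rw [hder.deriv, dstep]
  rw [← hj, ← hA, ← hB]
  ring

lemma countable_bad (t : ℝ) (n : ℕ) :
    Set.Countable {u : ℝ | ∃ m : ℤ, u = m * t / 2 ^ n} := by
  have h : {u : ℝ | ∃ m : ℤ, u = m * t / 2 ^ n} = Set.range (fun m : ℤ => (m : ℝ) * t / 2 ^ n) := by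
    ext u
    simp [eq_comm, Set.mem_range]
  rw [h]
  exact Set.countable_range _

lemma iterIntegral_const_word {d : ℕ} {t : ℝ} (ht : 0 < t) (n : ℕ) (i : Fin (d + 1))
    (Y : Fin (d + 1) → ℝ → ℝ) (I : List (Fin (d + 1))) (hI : ∀ m : Fin I.length, I.get m = i) :
    iterIntegral (fun j u => dyadicInterp t n (Y j) u) I t
      = (Y i t - Y i 0) ^ I.length / (Nat.factorial I.length : ℝ) := by
  classical
  set k := I.length with hk
  set f := Y i with hf
  set ψ : ℝ → ℝ := Set.indicator (Set.Icc 0 t) (dstep t n f) with hψ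
  have hψint : Integrable ψ :=
    (integrable_indicator_iff measurableSet_Icc).2 (dstep_integrableOn ht n f)
  have hψsupp : ∀ x, x ∉ Set.Icc (0:ℝ) t → ψ x = 0 := fun x hx =>
    Set.indicator_of_notMem hx _
  have hN := countable_bad t n
  have hbad : volume (⋃ m : Fin k, (fun s : Fin k → ℝ => s m) ⁻¹'
      {u : ℝ | ∃ m' : ℤ, u = m' * t / 2 ^ n}) = 0 := by
    apply measure_iUnion_null
    intro m
    rw [MeasureTheory.volume_pi]
    exact Measure.pi_eval_preimage_null _ (hN.measure_zero _)
  rw [iterIntegral]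
  have hg : ∀ s : Fin k → ℝ,
      (∏ m : Fin k, deriv ((fun j u => dyadicInterp t n (Y j) u) (I.get m)) (s m))
        = ∏ m : Fin k, deriv (dyadicInterp t n f) (s m) := by
    intro s
    apply Finset.prod_congr rfl
    intro m _
    rw [hI m]
  rw [show (∫ s in simplexSet k t,
        ∏ m : Fin k, deriv ((fun j u => dyadicInterp t n (Y j) u) (I.get m)) (s m))
      = ∫ s in simplexSet k t, ∏ m : Fin k, deriv (dyadicInterp t n f) (s m) from
    integral_congr_ae (ae_of_all _ fun s => hg s)]
  have hcong : ∫ s in simplexSet k t, ∏ m : Fin k, deriv (dyadicInterp t n f) (s m)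
      = ∫ s in simplexSet k t, ∏ m : Fin k, ψ (s m) := by
    apply setIntegral_congr_ae (meas_simplexSet k t)
    filter_upwards [compl_mem_ae_iff.2 hbad] with s hs hmem
    apply Finset.prod_congr rfl
    intro m _
    have hsm : s m ∉ {u : ℝ | ∃ m' : ℤ, u = m' * t / 2 ^ n} := by
      intro hc
      exact hs (Set.mem_iUnion.2 ⟨m, hc⟩)
    have h1 : deriv (dyadicInterp t n f) (s m) = dstep t n f (s m) :=
      dyadic_deriv ht n f (fun m' hc => hsm ⟨m', hc⟩)
    have h2 : ψ (s m) = dstep t n f (s m) :=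
      Set.indicator_of_mem (Set.mem_Icc.2 ⟨(hmem.1 m).1, (hmem.1 m).2⟩) _
    rw [h1, h2]
  rw [hcong, simplex_integral k ht ψ hψint hψsupp]
  rw [hψ, integral_indicator measurableSet_Icc, dstep_integral ht n f]

lemma stratIter_const_word {d : ℕ} {Ω : Type*} (B : ℝ → Ω → Fin (d + 1) → ℝ) {t : ℝ}
    (ht : 0 < t) (i : Fin (d + 1)) (I : List (Fin (d + 1)))
    (hI : ∀ m : Fin I.length, I.get m = i) (ω : Ω) :
    stratIter B I t ω = (B t ω i - B 0 ω i) ^ I.length / (Nat.factorial I.length : ℝ) := by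
  rw [stratIter]
  apply Filter.Tendsto.limUnder_eq
  have hconst : (fun n : ℕ =>
      iterIntegral (fun j u => dyadicInterp t n (fun v => B v ω j) u) I t)
      = fun _ : ℕ => (B t ω i - B 0 ω i) ^ I.length / (Nat.factorial I.length : ℝ) := by
    funext n
    exact iterIntegral_const_word ht n i (fun j v => B v ω j) I hI
  rw [hconst]
  exact tendsto_const_nhds


lemma ofFn_perm_const {α : Type*} {I : List α} {i : α} (hI : ∀ m : Fin I.length, I.get m = i)
    (σ : Equiv.Perm (Fin I.length)) :
    (List.ofFn fun j => I.get (σ⁻¹ j)) = I := by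
  apply List.ext_get
  · simp
  · intro m h1 h2
    rw [List.get_ofFn, hI, hI]

/- STATEMENT 16: Chen–Strichartz coefficients of constant words.
(i) The combinatorial identity `Σ_{σ ∈ S_k} (-1)^{e(σ)} / (k² binom(k-1, e(σ))) = 0`
for `k ≥ 2`;
(ii) the symmetrized iterated Stratonovich integral of a single coordinate:
a.s. `∫_{Δ^k[0,t]} ∘dB^{(i,...,i)} = (B^i_t)^k / k!` (same for every permuted word,
since all letters are equal);
(iii) consequently `Λ_{(i,...,i)}(B)_t = 0` for words of length `k ≥ 2` with all
letters equal, while `Λ_{(i)}(B)_t = B^i_t` a.s. -/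
theorem statement16 (d : ℕ) {Ω : Type*} [MeasurableSpace Ω] (μ : Measure Ω)
    [IsProbabilityMeasure μ] (B : ℝ → Ω → Fin d → ℝ) (hB : IsBrownian d μ B)
    (t : ℝ) (ht : 0 < t) (i : Fin (d + 1)) :
    (∀ k : ℕ, 2 ≤ k →
      ∑ σ : Equiv.Perm (Fin k),
        (-1 : ℝ) ^ descents σ / ((k : ℝ) ^ 2 * ((k - 1).choose (descents σ) : ℝ)) = 0) ∧
    (∀ k : ℕ, 1 ≤ k → ∀ᵐ ω ∂μ,
      stratIter (withTime B) (List.replicate k i) t ω =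
        (withTime B t ω i) ^ k / (Nat.factorial k : ℝ)) ∧
    (∀ k : ℕ, 2 ≤ k → ∀ ω,
      chenCoeff (withTime B) (List.replicate k i) t ω = 0) ∧
    (∀ᵐ ω ∂μ, chenCoeff (withTime B) (i :: List.nil) t ω = withTime B t ω i) := by
  classical
  have h0 : ∀ᵐ ω ∂μ, withTime B 0 ω i = 0 := by
    filter_upwards [hB.init] with ω hω
    show (Fin.cons (0:ℝ) (B 0 ω) : Fin (d+1) → ℝ) i = 0
    rw [hω]
    induction i using Fin.cases with
    | zero => simp
    | succ i' => simp
  have hrepl : ∀ k : ℕ, ∀ m : Fin (List.replicate k i).length,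
      (List.replicate k i).get m = i := by
    intro k m
    simp
  refine ⟨fun k hk => part_i k hk, ?_, ?_, ?_⟩
  · -- (ii)
    intro k hk
    filter_upwards [h0] with ω hω
    rw [stratIter_const_word (withTime B) ht i _ (hrepl k) ω, hω, sub_zero,
      List.length_replicate]
  · -- (iii)
    intro k hk ω
    rw [chenCoeff]
    have hlen : 2 ≤ (List.replicate k i).length := by
      rw [List.length_replicate]; exact hk
    have hword : ∀ σ : Equiv.Perm (Fin (List.replicate k i).length),
        (List.ofFn fun j => (List.replicate k i).get (σ⁻¹ j)) = List.replicate k i :=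
      fun σ => ofFn_perm_const (hrepl k) σ
    calc (∑ σ : Equiv.Perm (Fin (List.replicate k i).length),
          ((-1 : ℝ) ^ descents σ /
            (((List.replicate k i).length : ℝ) ^ 2 *
              (((List.replicate k i).length - 1).choose (descents σ) : ℝ))) *
            stratIter (withTime B) (List.ofFn fun j => (List.replicate k i).get (σ⁻¹ j)) t ω)
        = ∑ σ : Equiv.Perm (Fin (List.replicate k i).length),
          ((-1 : ℝ) ^ descents σ /
            (((List.replicate k i).length : ℝ) ^ 2 *
              (((List.replicate k i).length - 1).choose (descents σ) : ℝ))) *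
            stratIter (withTime B) (List.replicate k i) t ω := by
          apply Finset.sum_congr rfl
          intro σ _
          rw [hword σ]
      _ = (∑ σ : Equiv.Perm (Fin (List.replicate k i).length),
          (-1 : ℝ) ^ descents σ /
            (((List.replicate k i).length : ℝ) ^ 2 *
              (((List.replicate k i).length - 1).choose (descents σ) : ℝ))) *
            stratIter (withTime B) (List.replicate k i) t ω := by
          rw [Finset.sum_mul]
      _ = 0 := by
          rw [part_i _ hlen, zero_mul]
  · -- (iv)
    filter_upwards [h0] with ω hω
    rw [chenCoeff]
    have hI1 : ∀ m : Fin ((i :: List.nil).length), (i :: List.nil).get m = i := by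
      intro m
      have hm : (m : ℕ) < 1 := m.isLt
      have hm0 : m = ⟨0, by norm_num⟩ := by
        apply Fin.ext
        simpa using Nat.lt_one_iff.1 hm
      rw [hm0]
      rfl
    have hword : ∀ σ : Equiv.Perm (Fin ((i :: List.nil).length)),
        (List.ofFn fun j => (i :: List.nil).get (σ⁻¹ j)) = (i :: List.nil) :=
      fun σ => ofFn_perm_const hI1 σ
    have hdesc : ∀ σ : Equiv.Perm (Fin ((i :: List.nil).length)), descents σ = 0 := by
      intro σ
      rw [descents_eq_sum]
      show ∑ x ∈ Finset.range 1, dInd σ x = 0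
      rw [Finset.sum_range_one, dInd_eq_zero σ (by norm_num)]
    have hstrat : stratIter (withTime B) (i :: List.nil) t ω = withTime B t ω i := by
      rw [stratIter_const_word (withTime B) ht i _ hI1 ω, hω, sub_zero]
      show (withTime B t ω i) ^ 1 / ((Nat.factorial 1 : ℕ) : ℝ) = withTime B t ω i
      simp
    rw [Finset.sum_congr rfl (fun σ _ => by rw [hword σ, hdesc σ, hstrat])]
    rw [Finset.sum_const, Finset.card_univ, Fintype.card_perm]
    show ((Nat.factorial (Fintype.card (Fin 1)) : ℕ) : ℕ) •
      ((-1 : ℝ) ^ 0 / (((i :: List.nil).length : ℝ) ^ 2 * ((((i :: List.nil).length - 1).choose 0 : ℕ) : ℝ)) * withTime B t ω i) = withTime B t ω i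
    simp

end
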